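/- If f ∈ C⁴[−1,1] with f⁽⁴⁾ ≥ 0 on [−1,1], then 0 ≤ ∫₋₁¹ f(t) dt − [f(−√3/3) + f(√3/3)] ≤ [(1/3)f(−1) + (4/3)f(0) + (1/3)f(1)] − ∫₋₁¹ f(t) dt. That is, the remainder of the 2-point Gauss quadrature is nonnegative and not greater than the remainder of Simpson's rule for 3-convex functions. -/

import Mathlib

/-!
Both rules integrate cubics exactly, so by the Peano kernel theorem each remainder is
`∫ K(t) f⁗(t) dt` with an explicit piecewise quartic kernel: `∫ f - G₂[f]` has kernel `K_G`
and `∫ f - Lob₃[f]` has kernel `K_S`. The theorem then follows from `f⁗ ≥ 0` and the pointwise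
inequalities `0 ≤ K_G` and `K_G + K_S ≤ 0` on `[-1, 1]`. The kernel representation comes from
Taylor's formula with integral remainder at `-1`, applied to `f` at each node and to the
antiderivative of `f` at `1`.
-/

open Set Finset Nat MeasureTheory

theorem iteratedDerivWithin_subset {𝕜 F : Type*} [NontriviallyNormedField 𝕜]
    [NormedAddCommGroup F] [NormedSpace 𝕜 F] {f : 𝕜 → F} {s t : Set 𝕜} {n : ℕ} {x : 𝕜}
    (hst : s ⊆ t) (hs : UniqueDiffOn 𝕜 s) (ht : UniqueDiffOn 𝕜 t) (hf : ContDiffOn 𝕜 n f t)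
    (hx : x ∈ s) : iteratedDerivWithin n f s x = iteratedDerivWithin n f t x := by
  simp only [iteratedDerivWithin_eq_iteratedFDerivWithin,
    iteratedFDerivWithin_subset hst hs ht hf hx]

section Taylor

variable {f : ℝ → ℝ} {a b : ℝ} {n : ℕ}

theorem taylor_integral_remainder_Icc {x : ℝ} (hab : a < b)
    (hf : ContDiffOn ℝ (n + 1) f (Icc a b)) (hx : x ∈ Icc a b) :
    f x = ∑ k ∈ range (n + 1), iteratedDerivWithin k f (Icc a b) a * (x - a) ^ k / k ! +
      ∫ t in a..x, (x - t) ^ n / n ! * iteratedDerivWithin (n + 1) f (Icc a b) t := by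
  rcases hx.1.eq_or_lt with rfl | hax
  · have := taylor_within_apply f n (Icc a b) a a
    rw [taylorWithinEval_self] at this
    simp only [intervalIntegral.integral_same, add_zero]
    conv_lhs => rw [this]
    exact sum_congr rfl fun k _ => by simp only [smul_eq_mul]; ring
  have hsub : Icc a x ⊆ Icc a b := Icc_subset_Icc_right hx.2
  have hu : UniqueDiffOn ℝ (Icc a x) := uniqueDiffOn_Icc hax
  have hu' : UniqueDiffOn ℝ (Icc a b) := uniqueDiffOn_Icc hab
  have h := taylor_integral_remainder (hf.mono (uIcc_of_le hax.le ▸ hsub))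
  rw [uIcc_of_le hax.le, taylor_within_apply, sub_eq_iff_eq_add'] at h
  rw [h]
  congr 1
  · refine sum_congr rfl fun k hk => ?_
    rw [iteratedDerivWithin_subset hsub hu hu' (hf.of_le (by norm_cast; simp at hk; omega))
      (left_mem_Icc.2 hax.le), smul_eq_mul]
    ring
  · refine intervalIntegral.integral_congr fun t ht => ?_
    rw [uIcc_of_le hax.le] at ht
    simp only [smul_eq_mul]
    rw [iteratedDerivWithin_subset hsub hu hu' hf ht]

theorem intervalIntegrable_iteratedDerivWithin_Icc (hab : a < b)
    (hf : ContDiffOn ℝ n f (Icc a b)) :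
    IntervalIntegrable (iteratedDerivWithin n f (Icc a b)) volume a b :=
  ((hf.continuousOn_iteratedDerivWithin le_rfl (uniqueDiffOn_Icc hab)).mono
    (uIcc_subset_Icc (left_mem_Icc.2 hab.le) (right_mem_Icc.2 hab.le))).intervalIntegrable

theorem hasDerivWithinAt_integral_Icc {x : ℝ} (hf : ContinuousOn f (Icc a b)) (hx : x ∈ Icc a b) :
    HasDerivWithinAt (fun u => ∫ t in a..u, f t) (f x) (Icc a b) x := by
  -- the `FTCFilter` instance for `𝓝[Icc a b] x` is found from this `Fact`
  have := Fact.mk hx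
  exact intervalIntegral.integral_hasDerivWithinAt_right
    ((hf.mono (Icc_subset_Icc le_rfl hx.2)).intervalIntegrable_of_Icc hx.1)
    (hf.stronglyMeasurableAtFilter_nhdsWithin measurableSet_Icc x) (hf.continuousWithinAt hx)

theorem integral_eq_taylor_integral_remainder (hab : a < b)
    (hf : ContDiffOn ℝ (n + 1) f (Icc a b)) :
    ∫ t in a..b, f t = ∑ k ∈ range (n + 1),
        iteratedDerivWithin k f (Icc a b) a * (b - a) ^ (k + 1) / (k + 1)! +
      ∫ t in a..b, (b - t) ^ (n + 1) / (n + 1)! * iteratedDerivWithin (n + 1) f (Icc a b) t := by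
  set F : ℝ → ℝ := fun u => ∫ t in a..u, f t
  have hu : UniqueDiffOn ℝ (Icc a b) := uniqueDiffOn_Icc hab
  have hF' : ∀ x ∈ Icc a b, HasDerivWithinAt F (f x) (Icc a b) x :=
    fun x hx => hasDerivWithinAt_integral_Icc hf.continuousOn hx
  have hdF : EqOn (derivWithin F (Icc a b)) f (Icc a b) :=
    fun x hx => (hF' x hx).derivWithin (hu x hx)
  have hF : ContDiffOn ℝ (n + 1 + 1) F (Icc a b) :=
    (contDiffOn_succ_iff_derivWithin hu).2 ⟨fun x hx => (hF' x hx).differentiableWithinAt,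
      by simp, hf.congr hdF⟩
  have hDF : ∀ k, EqOn (iteratedDerivWithin (k + 1) F (Icc a b))
      (iteratedDerivWithin k f (Icc a b)) (Icc a b) := fun k => by
    rw [iteratedDerivWithin_succ']
    exact iteratedDerivWithin_congr hdF
  have h := taylor_integral_remainder_Icc hab hF (right_mem_Icc.2 hab.le)
  rw [sum_range_succ'] at h
  simp only [F, intervalIntegral.integral_same, iteratedDerivWithin_zero, zero_mul, zero_div,
    add_zero] at h
  rw [h]
  congr 1
  · refine sum_congr rfl fun k _ => by rw [hDF k (left_mem_Icc.2 hab.le)]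
  · refine intervalIntegral.integral_congr fun t ht => ?_
    rw [uIcc_of_le hab.le] at ht
    rw [hDF (n + 1) ht]

-- `n ≠ 0` because `max (x - t) 0 ^ 0 = 1` is not the indicator of `t < x`.
theorem taylor_integral_remainder_Icc_posPart {x : ℝ} (hab : a < b) (hn : n ≠ 0)
    (hf : ContDiffOn ℝ (n + 1) f (Icc a b)) (hx : x ∈ Icc a b) :
    f x = ∑ k ∈ range (n + 1), iteratedDerivWithin k f (Icc a b) a * (x - a) ^ k / k ! +
      ∫ t in a..b, max (x - t) 0 ^ n / n ! * iteratedDerivWithin (n + 1) f (Icc a b) t := by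
  have hint : ∀ c ∈ Icc a b, ∀ d ∈ Icc a b, IntervalIntegrable
      (fun t => max (x - t) 0 ^ n / n ! * iteratedDerivWithin (n + 1) f (Icc a b) t)
      volume c d := fun c hc d hd =>
    (((hf.continuousOn_iteratedDerivWithin le_rfl (uniqueDiffOn_Icc hab)).mono
      (uIcc_subset_Icc hc hd)).intervalIntegrable).continuousOn_mul (by fun_prop)
  rw [← intervalIntegral.integral_add_adjacent_intervals (hint a (left_mem_Icc.2 hab.le) x hx)
      (hint x hx b (right_mem_Icc.2 hab.le)),
    intervalIntegral.integral_congr (g := fun _ => (0 : ℝ)) (a := x) (b := b),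
    intervalIntegral.integral_zero, add_zero]
  · refine (taylor_integral_remainder_Icc hab hf hx).trans (congrArg _ ?_)
    refine intervalIntegral.integral_congr fun t ht => ?_
    rw [uIcc_of_le hx.1] at ht
    simp only [max_eq_left (sub_nonneg.2 ht.2)]
  · intro t ht
    rw [uIcc_of_le hx.2] at ht
    simp [max_eq_right (sub_nonpos.2 ht.1), hn]

end Taylor

section Peano

variable {ι : Type*} [Fintype ι]

/-- The Peano kernel of `f ↦ ∫ a..b, f - ∑ i, w i * f (x i)` for a rule exact in degree `n`. -/
noncomputable def peanoKernel (n : ℕ) (b : ℝ) (w x : ι → ℝ) (t : ℝ) : ℝ :=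
  (b - t) ^ (n + 1) / (n + 1)! - ∑ i, w i * (max (x i - t) 0 ^ n / n !)

theorem continuous_peanoKernel (n : ℕ) (b : ℝ) (w x : ι → ℝ) :
    Continuous (peanoKernel n b w x) := by
  unfold peanoKernel; fun_prop

theorem integral_sub_sum_eq_integral_peanoKernel {f : ℝ → ℝ} {a b : ℝ} {n : ℕ} {w x : ι → ℝ}
    (hab : a < b) (hn : n ≠ 0) (hx : ∀ i, x i ∈ Icc a b)
    -- exactness in degree `n`, tested on the basis `(t - a) ^ k`
    (hexact : ∀ k ≤ n, ∑ i, w i * (x i - a) ^ k = (b - a) ^ (k + 1) / (k + 1))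
    (hf : ContDiffOn ℝ (n + 1) f (Icc a b)) :
    (∫ t in a..b, f t) - ∑ i, w i * f (x i) =
      ∫ t in a..b, peanoKernel n b w x t * iteratedDerivWithin (n + 1) f (Icc a b) t := by
  have hD := intervalIntegrable_iteratedDerivWithin_Icc hab hf
  have hpoly : ∑ i, w i * ∑ k ∈ range (n + 1),
        iteratedDerivWithin k f (Icc a b) a * (x i - a) ^ k / k ! =
      ∑ k ∈ range (n + 1),
        iteratedDerivWithin k f (Icc a b) a * (b - a) ^ (k + 1) / (k + 1)! := by
    simp_rw [mul_sum]
    rw [sum_comm]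
    refine sum_congr rfl fun k hk => ?_
    have := hexact k (by simpa [Nat.lt_succ_iff] using hk)
    calc ∑ i, w i * (iteratedDerivWithin k f (Icc a b) a * (x i - a) ^ k / k !)
        = iteratedDerivWithin k f (Icc a b) a / k ! * ∑ i, w i * (x i - a) ^ k := by
          rw [mul_sum]; exact sum_congr rfl fun i _ => by ring
      _ = _ := by rw [this, Nat.factorial_succ]; push_cast; field_simp
  have hrem : ∑ i, w i * ∫ t in a..b,
        max (x i - t) 0 ^ n / n ! * iteratedDerivWithin (n + 1) f (Icc a b) t =
      ∫ t in a..b, (∑ i, w i * (max (x i - t) 0 ^ n / n !)) *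
        iteratedDerivWithin (n + 1) f (Icc a b) t := by
    simp_rw [← intervalIntegral.integral_const_mul]
    rw [← intervalIntegral.integral_finsetSum fun i _ =>
      (hD.continuousOn_mul (by fun_prop)).const_mul (w i)]
    simp_rw [sum_mul, mul_assoc]
  rw [integral_eq_taylor_integral_remainder hab hf]
  simp_rw [taylor_integral_remainder_Icc_posPart hab hn hf (hx _), mul_add, sum_add_distrib]
  rw [hpoly, hrem, add_sub_add_left_eq_sub, ← intervalIntegral.integral_sub
    (hD.continuousOn_mul (by fun_prop)) (hD.continuousOn_mul (by fun_prop))]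
  simp_rw [peanoKernel, sub_mul]

end Peano

-- AM–GM for `c, u/3, u/3, u/3` gives `(c + u) ^ 4 ≥ 256 / 27 * c * u ^ 3`.
theorem four_mul_pow_three_le_add_pow_four {c u : ℝ} (hc : 27 / 64 ≤ c) (hu : 0 ≤ u) :
    4 * u ^ 3 ≤ (c + u) ^ 4 := by
  have hq : 0 ≤ u ^ 2 + 14 / 27 * c * u + c ^ 2 / 9 := by
    have : 0 ≤ c := by linarith
    positivity
  nlinarith [mul_nonneg (sq_nonneg (u - 3 * c)) hq,
    mul_nonneg (pow_nonneg hu 3) (by linarith : (0 : ℝ) ≤ 256 / 27 * c - 4)]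

theorem bounds_of_sq_eq_one_third {s : ℝ} (hs : s ^ 2 = 1 / 3) (hs0 : 0 < s) :
    4 / 7 < s ∧ s < 37 / 64 :=
  ⟨by nlinarith, by nlinarith⟩

theorem peanoKernel_gauss_nonneg {s t : ℝ} (hs : s ^ 2 = 1 / 3) (hs0 : 0 < s)
    (ht : t ∈ Icc (-1 : ℝ) 1) : 0 ≤ peanoKernel 3 1 ![1, 1] ![-s, s] t := by
  obtain ⟨-, hs1⟩ := bounds_of_sq_eq_one_third hs hs0
  obtain ⟨ht1, ht2⟩ := ht
  simp only [peanoKernel, Fin.sum_univ_two, Matrix.cons_val_zero, Matrix.cons_val_one, one_mul]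
  norm_num [Nat.factorial]
  -- for `s ≤ |t|` the kernel is `(1 - |t|) ^ 4 / 24`, the rule being exact on cubics
  rcases le_or_gt t (-s) with h | h
  · rw [max_eq_left (by linarith), max_eq_left (by linarith)]
    nlinarith [pow_nonneg (by linarith : (0 : ℝ) ≤ 1 + t) 4]
  rcases le_or_gt t s with h' | h'
  · rw [max_eq_right (by linarith), max_eq_left (by linarith)]
    have := four_mul_pow_three_le_add_pow_four (c := 1 - s) (u := s - t) (by linarith)
      (by linarith)
    rw [sub_add_sub_cancel] at this
    linarith
  · rw [max_eq_right (by linarith), max_eq_right (by linarith)]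
    nlinarith [pow_nonneg (by linarith : (0 : ℝ) ≤ 1 - t) 4]

theorem peanoKernel_gauss_add_simpson_nonpos {s t : ℝ} (hs : s ^ 2 = 1 / 3) (hs0 : 0 < s)
    (ht : t ∈ Icc (-1 : ℝ) 1) :
    peanoKernel 3 1 ![1, 1] ![-s, s] t +
      peanoKernel 3 1 ![1 / 3, 4 / 3, 1 / 3] ![-1, 0, 1] t ≤ 0 := by
  obtain ⟨hs1, hs2⟩ := bounds_of_sq_eq_one_third hs hs0
  obtain ⟨ht1, ht2⟩ := ht
  simp only [peanoKernel, Fin.sum_univ_two, Fin.sum_univ_three, Matrix.cons_val_zero,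
    Matrix.cons_val_one, Matrix.cons_val_two, one_mul, Matrix.tail_cons, Matrix.head_cons]
  norm_num [Nat.factorial]
  rw [max_eq_right (by linarith : -1 - t ≤ 0), max_eq_left (by linarith : 0 ≤ 1 - t)]
  rcases le_or_gt t (-s) with h | h
  · rw [max_eq_left (by linarith), max_eq_left (by linarith), max_eq_left (by linarith)]
    nlinarith [pow_nonneg (by linarith : (0 : ℝ) ≤ 1 + t) 3, sq_nonneg (1 + t)]
  rcases le_or_gt t 0 with h0 | h0
  · rw [max_eq_right (by linarith), max_eq_left (by linarith), max_eq_left (by linarith)]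
    nlinarith [mul_nonneg (by linarith : (0 : ℝ) ≤ t + s) (by linarith : (0 : ℝ) ≤ -t),
      sq_nonneg (s + t), sq_nonneg (1 + 3 * t)]
  rcases le_or_gt t s with h' | h'
  · rw [max_eq_right (by linarith), max_eq_left (by linarith), max_eq_right (by linarith)]
    nlinarith [mul_nonneg h0.le (by linarith : (0 : ℝ) ≤ s - t), sq_nonneg (s - t),
      sq_nonneg (1 - 3 * t)]
  · rw [max_eq_right (by linarith), max_eq_right (by linarith), max_eq_right (by linarith)]
    nlinarith [pow_nonneg (by linarith : (0 : ℝ) ≤ 1 - t) 3]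

theorem integral_sub_gauss2_eq_integral_peanoKernel {f : ℝ → ℝ} {s : ℝ} (hs : s ^ 2 = 1 / 3)
    (hf : ContDiffOn ℝ 4 f (Icc (-1) 1)) :
    (∫ t in (-1 : ℝ)..1, f t) - (f (-s) + f s) =
      ∫ t in (-1 : ℝ)..1,
        peanoKernel 3 1 ![1, 1] ![-s, s] t * iteratedDerivWithin 4 f (Icc (-1) 1) t := by
  have hs1 : -1 ≤ s ∧ s ≤ 1 := ⟨by nlinarith, by nlinarith⟩
  have h := integral_sub_sum_eq_integral_peanoKernel (n := 3) (w := ![1, 1]) (x := ![-s, s])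
    (by norm_num) (by norm_num) (fun i => by fin_cases i <;> simp <;> constructor <;> linarith)
    (fun k hk => by interval_cases k <;> simp [Fin.sum_univ_two] <;> nlinarith) hf
  simpa [Fin.sum_univ_two] using h

theorem integral_sub_simpson_eq_integral_peanoKernel {f : ℝ → ℝ}
    (hf : ContDiffOn ℝ 4 f (Icc (-1) 1)) :
    (∫ t in (-1 : ℝ)..1, f t) - ((1 / 3) * f (-1) + (4 / 3) * f 0 + (1 / 3) * f 1) =
      ∫ t in (-1 : ℝ)..1, peanoKernel 3 1 ![1 / 3, 4 / 3, 1 / 3] ![-1, 0, 1] t *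
        iteratedDerivWithin 4 f (Icc (-1) 1) t := by
  have h := integral_sub_sum_eq_integral_peanoKernel (n := 3) (w := ![1 / 3, 4 / 3, 1 / 3])
    (x := ![-1, 0, 1]) (by norm_num) (by norm_num) (fun i => by fin_cases i <;> norm_num)
    (fun k hk => by interval_cases k <;> norm_num [Fin.sum_univ_succ]) hf
  norm_num [Fin.sum_univ_succ] at h
  rw [← h]
  ring

theorem gauss2_remainder_le_simpson_remainder (f : ℝ → ℝ)
    (hf : ContDiffOn ℝ 4 f (Set.Icc (-1:ℝ) 1))
    (h4 : ∀ x ∈ Set.Icc (-1:ℝ) 1, 0 ≤ iteratedDerivWithin 4 f (Set.Icc (-1:ℝ) 1) x) :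
    0 ≤ (∫ t in (-1:ℝ)..1, f t) - (f (-(Real.sqrt 3) / 3) + f (Real.sqrt 3 / 3)) ∧
    (∫ t in (-1:ℝ)..1, f t) - (f (-(Real.sqrt 3) / 3) + f (Real.sqrt 3 / 3)) ≤
      ((1 / 3) * f (-1) + (4 / 3) * f 0 + (1 / 3) * f 1) - ∫ t in (-1:ℝ)..1, f t := by
  rw [neg_div]
  set s := Real.sqrt 3 / 3
  have hs : s ^ 2 = 1 / 3 := by
    rw [div_pow, Real.sq_sqrt (by norm_num)]; norm_num
  have hs0 : 0 < s := by positivity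
  rw [integral_sub_gauss2_eq_integral_peanoKernel hs hf]
  have hS := integral_sub_simpson_eq_integral_peanoKernel hf
  have hD := intervalIntegrable_iteratedDerivWithin_Icc (by norm_num : (-1 : ℝ) < 1) hf
  set D := iteratedDerivWithin 4 f (Icc (-1) 1)
  set KG := peanoKernel 3 1 ![1, 1] ![-s, s]
  set KS := peanoKernel 3 1 ![1 / 3, 4 / 3, 1 / 3] ![-1, 0, 1]
  have hG : 0 ≤ ∫ t in (-1 : ℝ)..1, KG t * D t :=
    intervalIntegral.integral_nonneg (by norm_num) fun t ht =>
      mul_nonneg (peanoKernel_gauss_nonneg hs hs0 ht) (h4 t ht)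
  have hGS : (∫ t in (-1 : ℝ)..1, KG t * D t) + (∫ t in (-1 : ℝ)..1, KS t * D t) ≤ 0 := by
    rw [← intervalIntegral.integral_add
      (hD.continuousOn_mul (continuous_peanoKernel ..).continuousOn)
      (hD.continuousOn_mul (continuous_peanoKernel ..).continuousOn), ← neg_nonneg,
      ← intervalIntegral.integral_neg]
    refine intervalIntegral.integral_nonneg (by norm_num) fun t ht => ?_
    rw [← add_mul, ← neg_mul]
    exact mul_nonneg (neg_nonneg.2 (peanoKernel_gauss_add_simpson_nonpos hs hs0 ht)) (h4 t ht)
  constructor <;> linarith
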